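/- Let A ∈ ℂ^{m×n}, b ∈ ℂ^m, μ > 0. Then strong duality holds between the nonnegative unconstrained basis pursuit denoising problem and its dual: the minimum over real x ∈ ℝ^n with x ≥ 0 of Σᵢ xᵢ + (1/(2μ))‖A x − b‖₂² equals the maximum over y ∈ ℂ^m satisfying Re((A*y)ᵢ) ≤ 1 for all i of Re(b*y) − (μ/2)‖y‖₂², and both the minimum and the maximum are attained. -/

import Mathlib

/-!
For x ≥ 0 and any y one has the gap identity
  P x - D y = ∑ᵢ xᵢ (1 - Re (A*y)ᵢ) + ‖A x - b + μ y‖² / (2μ),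
which gives weak duality. Since P x ≥ ∑ᵢ xᵢ on the orthant, P attains its minimum at some x̃.
For ỹ = (b - A x̃)/μ the second term vanishes, and the same identity shows that the slack
1 - Re (A*ỹ) is the gradient of P at x̃. First-order optimality along the feasible directions
eᵢ and -x̃ makes this slack nonnegative and orthogonal to x̃, so ỹ is dual feasible and the
gap P x̃ - D ỹ is zero.
-/

open Filter Topology Matrix Finset

noncomputable def l1 {ι : Type*} [Fintype ι] (v : ι → ℂ) : ℝ := ∑ i, ‖v i‖

noncomputable def l2sq {ι : Type*} [Fintype ι] (v : ι → ℂ) : ℝ := ∑ i, (‖v i‖)^2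

noncomputable def l2 {ι : Type*} [Fintype ι] (v : ι → ℂ) : ℝ := Real.sqrt (l2sq v)

noncomputable def linf {ι : Type*} [Fintype ι] (v : ι → ℂ) : ℝ := ⨆ i, ‖v i‖

noncomputable def csign (w : ℂ) : ℂ := if w = 0 then 0 else w / ((‖w‖ : ℝ) : ℂ)

noncomputable def shrink {ι : Type*} [Fintype ι] (z : ι → ℂ) (ν : ℝ) : ι → ℂ :=
  fun i => ((max (‖z i‖ - ν) 0 : ℝ) : ℂ) * csign (z i)

noncomputable def reInner {ι : Type*} [Fintype ι] (y v : ι → ℂ) : ℝ :=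
  (∑ i, (starRingEnd ℂ) (y i) * v i).re

noncomputable def projBall {ι : Type*} [Fintype ι] (t : ℝ) (v : ι → ℂ) : ι → ℂ :=
  if l2 v ≤ t then v else (t / l2 v) • v

noncomputable def projBox {ι : Type*} [Fintype ι] (v : ι → ℂ) : ι → ℂ :=
  fun i => if ‖v i‖ ≤ 1 then v i else v i / ((‖v i‖ : ℝ) : ℂ)

noncomputable def lmax {m n : ℕ} (A : Matrix (Fin m) (Fin n) ℂ) : ℝ :=
  ⨆ i, (Matrix.isHermitian_conjTranspose_mul_self A).eigenvalues i

lemma nonneg_of_forall_mul_add_sq_mul_nonneg {a q : ℝ}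
    (h : ∀ t ∈ Set.Ioc (0 : ℝ) 1, 0 ≤ t * a + t ^ 2 * q) : 0 ≤ a := by
  have hlim : Tendsto (fun t : ℝ => a + t * q) (𝓝[>] 0) (𝓝 a) :=
    ((continuous_const.add (continuous_id.mul continuous_const)).tendsto' 0 a
      (by simp)).mono_left nhdsWithin_le_nhds
  refine ge_of_tendsto hlim ?_
  filter_upwards [Ioc_mem_nhdsGT (zero_lt_one' ℝ)] with t ht
  have : 0 ≤ t * (a + t * q) := by linarith [h t ht]
  exact nonneg_of_mul_nonneg_right this ht.1

section Norms

variable {ι : Type*} [Fintype ι]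

lemma l2sq_nonneg (v : ι → ℂ) : 0 ≤ l2sq v :=
  Finset.sum_nonneg fun _ _ => sq_nonneg _

@[simp]
lemma l2sq_zero : l2sq (0 : ι → ℂ) = 0 := by
  simp [l2sq]

@[fun_prop]
lemma continuous_l2sq : Continuous (l2sq : (ι → ℂ) → ℝ) := by
  unfold l2sq; fun_prop

lemma l2sq_ofReal_smul (t : ℝ) (v : ι → ℂ) : l2sq ((t : ℂ) • v) = t ^ 2 * l2sq v := by
  simp [l2sq, Finset.mul_sum, mul_pow]

lemma reInner_comm (y v : ι → ℂ) : reInner y v = reInner v y := by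
  simp only [reInner, Complex.re_sum, Complex.mul_re, Complex.conj_re, Complex.conj_im]
  exact Finset.sum_congr rfl fun _ _ => by ring

lemma reInner_sub_right (y v w : ι → ℂ) : reInner y (v - w) = reInner y v - reInner y w := by
  simp [reInner, mul_sub, Finset.sum_sub_distrib]

lemma l2sq_add_ofReal_smul (r u : ι → ℂ) (t : ℝ) :
    l2sq (r + (t : ℂ) • u) = l2sq r + 2 * t * reInner u r + t ^ 2 * l2sq u := by
  simp only [l2sq, reInner, Complex.sq_norm, Complex.re_sum, Finset.mul_sum,
    ← Finset.sum_add_distrib]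
  refine Finset.sum_congr rfl fun i _ => ?_
  simp only [Pi.add_apply, Pi.smul_apply, smul_eq_mul, Complex.normSq_add, Complex.normSq_mul,
    Complex.normSq_ofReal, Complex.mul_re, Complex.mul_im, Complex.conj_re, Complex.conj_im,
    Complex.ofReal_re, Complex.ofReal_im]
  ring

end Norms

lemma exists_forall_le_of_sum_le {ι : Type*} [Fintype ι] {f : (ι → ℝ) → ℝ} (hf : Continuous f)
    (hsum : ∀ x, (∀ i, 0 ≤ x i) → ∑ i, x i ≤ f x) :
    ∃ x, (∀ i, 0 ≤ x i) ∧ ∀ x', (∀ i, 0 ≤ x' i) → f x ≤ f x' := by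
  set K : Set (ι → ℝ) := {x | 0 ≤ x ∧ ∑ i, x i ≤ f 0}
  have h0K : (0 : ι → ℝ) ∈ K := ⟨le_rfl, by simpa using hsum 0 fun _ => le_rfl⟩
  have hK : IsCompact K := by
    refine (isCompact_Icc (a := 0) (b := fun _ => f 0)).of_isClosed_subset ?_
      fun x hx => ⟨hx.1, fun i => ?_⟩
    · exact (isClosed_le continuous_const continuous_id).inter
        (isClosed_le (continuous_finsetSum _ fun i _ => continuous_apply i) continuous_const)
    · exact (Finset.single_le_sum (fun k _ => hx.1 k) (Finset.mem_univ i)).trans hx.2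
  obtain ⟨x, hxK, hmin⟩ := hK.exists_isMinOn ⟨0, h0K⟩ hf.continuousOn
  refine ⟨x, hxK.1, fun x' hx' => ?_⟩
  by_cases hx'K : x' ∈ K
  · exact hmin hx'K
  · have : f 0 < ∑ i, x' i := by
      by_contra h
      exact hx'K ⟨hx', not_lt.mp h⟩
    linarith [isMinOn_iff.mp hmin 0 h0K, hsum x' hx']

section Duality

variable {ι κ : Type*} [Fintype ι] (A : Matrix κ ι ℂ) (b : κ → ℂ) (μ : ℝ)

noncomputable def dualOfPrimal (x : ι → ℝ) : κ → ℂ := (μ : ℂ)⁻¹ • (b - A *ᵥ fun i => (x i : ℂ))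

lemma residual_add_smul_dualOfPrimal (hμ : μ ≠ 0) (x : ι → ℝ) :
    A *ᵥ (fun i => (x i : ℂ)) - b + (μ : ℂ) • dualOfPrimal A b μ x = 0 := by
  rw [dualOfPrimal, smul_inv_smul₀ (by exact_mod_cast hμ), sub_add_sub_cancel, sub_self]

variable [Fintype κ]

noncomputable def primalObj (x : ι → ℝ) : ℝ :=
  (∑ i, x i) + (1 / (2 * μ)) * l2sq (A *ᵥ (fun i => (x i : ℂ)) - b)

noncomputable def dualObj (y : κ → ℂ) : ℝ := reInner b y - (μ / 2) * l2sq y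

noncomputable def dualSlack (y : κ → ℂ) (i : ι) : ℝ := 1 - ((Aᴴ *ᵥ y) i).re

lemma reInner_mulVec_ofReal (y : κ → ℂ) (x : ι → ℝ) :
    reInner y (A *ᵥ fun i => (x i : ℂ)) = ∑ i, x i * ((Aᴴ *ᵥ y) i).re := by
  simp only [reInner, Matrix.mulVec, dotProduct, Matrix.conjTranspose_apply, Finset.mul_sum,
    Complex.re_sum]
  rw [Finset.sum_comm]
  refine Finset.sum_congr rfl fun i _ => Finset.sum_congr rfl fun j _ => ?_
  simp only [Complex.mul_re, Complex.conj_re, Complex.conj_im, Complex.ofReal_re,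
    Complex.ofReal_im, Complex.mul_im, RCLike.star_def]
  ring

lemma primalObj_sub_dualObj (hμ : μ ≠ 0) (x : ι → ℝ) (y : κ → ℂ) :
    primalObj A b μ x - dualObj b μ y = ∑ i, x i * dualSlack A y i
      + (1 / (2 * μ)) * l2sq (A *ᵥ (fun i => (x i : ℂ)) - b + (μ : ℂ) • y) := by
  rw [l2sq_add_ofReal_smul, reInner_sub_right, reInner_mulVec_ofReal, reInner_comm y b]
  simp only [primalObj, dualObj, dualSlack, mul_sub, mul_one, Finset.sum_sub_distrib]
  field_simp
  ring

lemma dualObj_le_primalObj (hμ : 0 < μ) {x : ι → ℝ} {y : κ → ℂ} (hx : ∀ i, 0 ≤ x i)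
    (hy : ∀ i, 0 ≤ dualSlack A y i) : dualObj b μ y ≤ primalObj A b μ x := by
  have hgap := primalObj_sub_dualObj A b μ hμ.ne' x y
  have : 0 ≤ ∑ i, x i * dualSlack A y i := Finset.sum_nonneg fun i _ => mul_nonneg (hx i) (hy i)
  have : 0 ≤ (1 / (2 * μ)) * l2sq (A *ᵥ (fun i => (x i : ℂ)) - b + (μ : ℂ) • y) :=
    mul_nonneg (by positivity) (l2sq_nonneg _)
  linarith

lemma primalObj_add_smul (hμ : μ ≠ 0) (x d : ι → ℝ) (t : ℝ) :
    primalObj A b μ (x + t • d) = primalObj A b μ x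
      + t * ∑ i, d i * dualSlack A (dualOfPrimal A b μ x) i
      + t ^ 2 * ((1 / (2 * μ)) * l2sq (A *ᵥ fun i => (d i : ℂ))) := by
  set y := dualOfPrimal A b μ x
  have hx := primalObj_sub_dualObj A b μ hμ x y
  have hxtd := primalObj_sub_dualObj A b μ hμ (x + t • d) y
  have hres : A *ᵥ (fun i => ((x + t • d) i : ℂ)) - b + (μ : ℂ) • y
      = (t : ℂ) • A *ᵥ fun i => (d i : ℂ) := by
    rw [← sub_add_cancel (A *ᵥ (fun i => ((x + t • d) i : ℂ))) (A *ᵥ fun i => (x i : ℂ)),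
      add_sub_assoc, add_assoc, residual_add_smul_dualOfPrimal A b μ hμ, add_zero,
      ← Matrix.mulVec_sub, ← Matrix.mulVec_smul]
    congr 1
    ext i
    simp
  rw [residual_add_smul_dualOfPrimal A b μ hμ, l2sq_zero] at hx
  rw [hres, l2sq_ofReal_smul] at hxtd
  simp only [Pi.add_apply, Pi.smul_apply, smul_eq_mul, add_mul, Finset.sum_add_distrib,
    mul_assoc, ← Finset.mul_sum] at hxtd
  linarith

lemma exists_primalObj_isMin (hμ : 0 < μ) :
    ∃ x, (∀ i, 0 ≤ x i) ∧ ∀ x', (∀ i, 0 ≤ x' i) → primalObj A b μ x ≤ primalObj A b μ x' := by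
  refine exists_forall_le_of_sum_le (by unfold primalObj; fun_prop) fun x _ => ?_
  have : 0 ≤ (1 / (2 * μ)) * l2sq (A *ᵥ (fun i => (x i : ℂ)) - b) :=
    mul_nonneg (by positivity) (l2sq_nonneg _)
  exact le_add_of_nonneg_right this

variable {A b μ}

lemma sum_mul_dualSlack_dualOfPrimal_nonneg (hμ : μ ≠ 0) {x : ι → ℝ} (hx : ∀ i, 0 ≤ x i)
    (hmin : ∀ x', (∀ i, 0 ≤ x' i) → primalObj A b μ x ≤ primalObj A b μ x')
    {d : ι → ℝ} (hxd : ∀ i, 0 ≤ x i + d i) :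
    0 ≤ ∑ i, d i * dualSlack A (dualOfPrimal A b μ x) i := by
  refine nonneg_of_forall_mul_add_sq_mul_nonneg
    (q := (1 / (2 * μ)) * l2sq (A *ᵥ fun i => (d i : ℂ))) fun t ht => ?_
  have hfeas : ∀ i, 0 ≤ (x + t • d) i := fun i => by
    simp only [Pi.add_apply, Pi.smul_apply, smul_eq_mul]
    nlinarith [mul_nonneg (sub_nonneg.2 ht.2) (hx i), mul_nonneg ht.1.le (hxd i)]
  have := hmin _ hfeas
  rw [primalObj_add_smul A b μ hμ] at this
  linarith

lemma dualSlack_dualOfPrimal_nonneg (hμ : μ ≠ 0) {x : ι → ℝ} (hx : ∀ i, 0 ≤ x i)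
    (hmin : ∀ x', (∀ i, 0 ≤ x' i) → primalObj A b μ x ≤ primalObj A b μ x') (i : ι) :
    0 ≤ dualSlack A (dualOfPrimal A b μ x) i := by
  classical
  have := sum_mul_dualSlack_dualOfPrimal_nonneg hμ hx hmin (d := Pi.single i 1) fun k => by
    rcases eq_or_ne k i with rfl | hk
    · simpa using add_nonneg (hx k) zero_le_one
    · simpa [hk] using hx k
  simpa [Pi.single_apply] using this

lemma sum_mul_dualSlack_dualOfPrimal_eq_zero (hμ : μ ≠ 0) {x : ι → ℝ} (hx : ∀ i, 0 ≤ x i)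
    (hmin : ∀ x', (∀ i, 0 ≤ x' i) → primalObj A b μ x ≤ primalObj A b μ x') :
    ∑ i, x i * dualSlack A (dualOfPrimal A b μ x) i = 0 := by
  have hle := sum_mul_dualSlack_dualOfPrimal_nonneg hμ hx hmin (d := -x) fun i => by simp
  have hge : 0 ≤ ∑ i, x i * dualSlack A (dualOfPrimal A b μ x) i :=
    Finset.sum_nonneg fun i _ => mul_nonneg (hx i) (dualSlack_dualOfPrimal_nonneg hμ hx hmin i)
  simp only [Pi.neg_apply, neg_mul, Finset.sum_neg_distrib, neg_nonneg] at hle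
  exact le_antisymm hle hge

end Duality

/-- Strong duality between the nonnegative QP_mu model (2.35) and its dual (2.36),
both optima attained. -/
theorem strong_duality_qp_nonneg {m n : ℕ} (A : Matrix (Fin m) (Fin n) ℂ)
    (b : Fin m → ℂ) (μ : ℝ) (hμ : 0 < μ) :
    let P : (Fin n → ℝ) → ℝ := fun x =>
      (∑ i, x i) + (1/(2*μ)) * l2sq (A.mulVec (fun i => (x i : ℂ)) - b)
    let D : (Fin m → ℂ) → ℝ := fun y => reInner b y - (μ/2) * l2sq y
    ∃ (xt : Fin n → ℝ) (yt : Fin m → ℂ),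
      (∀ i, 0 ≤ xt i) ∧
      (∀ i, ((Aᴴ.mulVec yt) i).re ≤ 1) ∧
      (∀ x : Fin n → ℝ, (∀ i, 0 ≤ x i) → P xt ≤ P x) ∧
      (∀ y : Fin m → ℂ, (∀ i, ((Aᴴ.mulVec y) i).re ≤ 1) → D y ≤ D yt) ∧
      P xt = D yt := by
  intro P D
  obtain ⟨xt, hxt, hmin⟩ := exists_primalObj_isMin A b μ hμ
  set yt := dualOfPrimal A b μ xt
  have hyt : ∀ i, 0 ≤ dualSlack A yt i := dualSlack_dualOfPrimal_nonneg hμ.ne' hxt hmin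
  have hgap : primalObj A b μ xt = dualObj b μ yt := by
    have := primalObj_sub_dualObj A b μ hμ.ne' xt yt
    rw [sum_mul_dualSlack_dualOfPrimal_eq_zero hμ.ne' hxt hmin,
      residual_add_smul_dualOfPrimal A b μ hμ.ne', l2sq_zero] at this
    linarith
  refine ⟨xt, yt, hxt, fun i => sub_nonneg.mp (hyt i), hmin, fun y hy => ?_, hgap⟩
  show dualObj b μ y ≤ dualObj b μ yt
  rw [← hgap]
  exact dualObj_le_primalObj A b μ hμ hxt fun i => sub_nonneg.mpr (hy i)
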